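/- arXiv:1308.6548 — 2 statements merged into one kernel-verified Lean document; each statement's English description precedes it below -/
import Mathlib

section
/- Partial naturality for glued metrics: let $q: C' \to C$ be a function with $C' = A' \cup B'$, $C = A \cup B$, $q(A') \subseteq A$, $q(B') \subseteq B$, and $q|_{A' \cap B'}: A' \cap B' \to A \cap B$ surjective. For compatible pseudometrics $d_A, d_B$, the pullback $q^*(g(d_A, d_B))$ equals $g(q|_{A'}^*(d_A),\ q|_{B'}^*(d_B))$. -/
open ENNReal

def IsPseudometricOn {X : Type} (A : Set X) (d : X → X → ℝ≥0∞) : Prop :=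
  (∀ x ∈ A, d x x = 0) ∧
  (∀ x ∈ A, ∀ y ∈ A, d x y = d y x) ∧
  (∀ x ∈ A, ∀ y ∈ A, ∀ z ∈ A, d x z ≤ d x y + d y z)

open Classical in
noncomputable def glueDist {X : Type} (U V : Set X) (dU dV : X → X → ℝ≥0∞)
    (x z : X) : ℝ≥0∞ :=
  if x ∈ U ∧ z ∈ U then dU x z
  else if x ∈ V ∧ z ∈ V then dV x z
  else if x ∈ U then ⨅ y ∈ U ∩ V, (dU x y + dV y z)
  else ⨅ y ∈ U ∩ V, (dV x y + dU y z)

/-! On `A' × A'` and `B' × B'` both sides are the pulled-back pseudometrics, and on mixed pairs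
both sides are infima over the intersection, which match because `q` maps `A' ∩ B'` onto `A ∩ B`.
Since `q x, q z` may lie in a common piece although `x, z` do not, the key point is that for
`x ∈ U`, `z ∈ V` the infimum formula computes `glueDist U V` in every case, by the triangle
inequality and compatibility. -/

theorem IsPseudometricOn.comp {X' X : Type} {A : Set X} {d : X → X → ℝ≥0∞}
    (hd : IsPseudometricOn A d) {q : X' → X} {A' : Set X'} (hq : Set.MapsTo q A' A) :
    IsPseudometricOn A' (fun a b => d (q a) (q b)) :=
  ⟨fun _ hx => hd.1 _ (hq hx),
   fun _ hx _ hy => hd.2.1 _ (hq hx) _ (hq hy),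
   fun _ hx _ hy _ hz => hd.2.2 _ (hq hx) _ (hq hy) _ (hq hz)⟩

section Glue

variable {X : Type} {U V : Set X} {dU dV : X → X → ℝ≥0∞} {x z : X}

theorem biInf_inter_add_eq_left (hU : IsPseudometricOn U dU) (hV : IsPseudometricOn V dV)
    (hcompat : ∀ w ∈ U ∩ V, ∀ w' ∈ U ∩ V, dU w w' = dV w w') (hx : x ∈ U) (hz : z ∈ U ∩ V) :
    ⨅ y ∈ U ∩ V, (dU x y + dV y z) = dU x z := by
  refine le_antisymm ?_ (le_iInf₂ fun y hy => ?_)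
  · exact iInf₂_le_of_le z hz (by rw [hV.1 z hz.2, add_zero])
  · rw [← hcompat y hy z hz]
    exact hU.2.2 x hx y hy.1 z hz.1

theorem biInf_inter_add_eq_right (hU : IsPseudometricOn U dU) (hV : IsPseudometricOn V dV)
    (hcompat : ∀ w ∈ U ∩ V, ∀ w' ∈ U ∩ V, dU w w' = dV w w') (hx : x ∈ U ∩ V) (hz : z ∈ V) :
    ⨅ y ∈ U ∩ V, (dU x y + dV y z) = dV x z := by
  refine le_antisymm ?_ (le_iInf₂ fun y hy => ?_)
  · exact iInf₂_le_of_le x hx (by rw [hU.1 x hx.1, zero_add])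
  · rw [hcompat x hx y hy]
    exact hV.2.2 x hx.2 y hy.2 z hz

theorem glueDist_of_mem_left (hx : x ∈ U) (hz : z ∈ U) : glueDist U V dU dV x z = dU x z := by
  rw [glueDist, if_pos ⟨hx, hz⟩]

theorem glueDist_of_mem_right (hcompat : ∀ w ∈ U ∩ V, ∀ w' ∈ U ∩ V, dU w w' = dV w w')
    (hx : x ∈ V) (hz : z ∈ V) : glueDist U V dU dV x z = dV x z := by
  by_cases hU : x ∈ U ∧ z ∈ U
  · rw [glueDist_of_mem_left hU.1 hU.2, hcompat x ⟨hU.1, hx⟩ z ⟨hU.2, hz⟩]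
  · rw [glueDist, if_neg hU, if_pos ⟨hx, hz⟩]

theorem glueDist_of_mem_left_of_mem_right (hU : IsPseudometricOn U dU)
    (hV : IsPseudometricOn V dV) (hcompat : ∀ w ∈ U ∩ V, ∀ w' ∈ U ∩ V, dU w w' = dV w w')
    (hx : x ∈ U) (hz : z ∈ V) :
    glueDist U V dU dV x z = ⨅ y ∈ U ∩ V, (dU x y + dV y z) := by
  by_cases hzU : z ∈ U
  · rw [glueDist_of_mem_left hx hzU, biInf_inter_add_eq_left hU hV hcompat hx ⟨hzU, hz⟩]
  by_cases hxV : x ∈ V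
  · rw [glueDist_of_mem_right hcompat hxV hz, biInf_inter_add_eq_right hU hV hcompat ⟨hx, hxV⟩ hz]
  rw [glueDist, if_neg fun h => hzU h.2, if_neg fun h => hxV h.1, if_pos hx]

theorem glueDist_of_mem_right_of_mem_left (hU : IsPseudometricOn U dU)
    (hV : IsPseudometricOn V dV) (hcompat : ∀ w ∈ U ∩ V, ∀ w' ∈ U ∩ V, dU w w' = dV w w')
    (hx : x ∈ V) (hz : z ∈ U) :
    glueDist U V dU dV x z = ⨅ y ∈ U ∩ V, (dV x y + dU y z) := by
  have hcompat' : ∀ w ∈ V ∩ U, ∀ w' ∈ V ∩ U, dV w w' = dU w w' := fun w hw w' hw' =>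
    (hcompat w hw.symm w' hw'.symm).symm
  by_cases hxU : x ∈ U
  · rw [glueDist_of_mem_left hxU hz, Set.inter_comm,
      biInf_inter_add_eq_right hV hU hcompat' ⟨hx, hxU⟩ hz]
  by_cases hzV : z ∈ V
  · rw [glueDist_of_mem_right hcompat hx hzV, Set.inter_comm,
      biInf_inter_add_eq_left hV hU hcompat' hx ⟨hzV, hz⟩]
  rw [glueDist, if_neg fun h => hxU h.1, if_neg fun h => hzV h.2, if_neg hxU]

end Glue

/-- partial naturality for glued pseudometrics: the pullback of the
gluing along `q` equals the gluing of the pullbacks. -/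
theorem glueDist_partial_naturality {X' X : Type} (q : X' → X)
    (A' B' : Set X') (A B : Set X) (dA dB : X → X → ℝ≥0∞)
    (hqA : Set.MapsTo q A' A) (hqB : Set.MapsTo q B' B)
    (hqSurj : Set.SurjOn q (A' ∩ B') (A ∩ B))
    (hA : IsPseudometricOn A dA) (hB : IsPseudometricOn B dB)
    (hcompat : ∀ w ∈ A ∩ B, ∀ w' ∈ A ∩ B, dA w w' = dB w w') :
    ∀ x ∈ A' ∪ B', ∀ z ∈ A' ∪ B',
      glueDist A B dA dB (q x) (q z)
        = glueDist A' B' (fun a b => dA (q a) (q b)) (fun a b => dB (q a) (q b)) x z := by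
  have hA' := hA.comp hqA
  have hB' := hB.comp hqB
  have hcompat' : ∀ w ∈ A' ∩ B', ∀ w' ∈ A' ∩ B', dA (q w) (q w') = dB (q w) (q w') :=
    fun w hw w' hw' => hcompat _ ⟨hqA hw.1, hqB hw.2⟩ _ ⟨hqA hw'.1, hqB hw'.2⟩
  have himage : q '' (A' ∩ B') = A ∩ B := hqSurj.image_eq_of_mapsTo (hqA.inter_inter hqB)
  rintro x (hx | hx) z (hz | hz)
  · rw [glueDist_of_mem_left (hqA hx) (hqA hz), glueDist_of_mem_left hx hz]
  · rw [glueDist_of_mem_left_of_mem_right hA hB hcompat (hqA hx) (hqB hz),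
      glueDist_of_mem_left_of_mem_right hA' hB' hcompat' hx hz, ← himage, iInf_image]
  · rw [glueDist_of_mem_right_of_mem_left hA hB hcompat (hqB hx) (hqA hz),
      glueDist_of_mem_right_of_mem_left hA' hB' hcompat' hx hz, ← himage, iInf_image]
  · rw [glueDist_of_mem_right hcompat (hqB hx) (hqB hz), glueDist_of_mem_right hcompat' hx hz]
end

section
/- In any compository, the 2-step rule holds: for a $k$-composable pair $(A,B) \in \mathcal{C}(m) \times \mathcal{C}(n)$ and any $k \le i \le m$ and $k \le j \le n$, $A \circ_k B = A \circ_i (At_i \circ_k B) = (A \circ_k B s_j) \circ_j B$. -/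
open CategoryTheory Opposite

namespace Compo

/-- The object `[n]` of the simplex category. -/
abbrev sobj (n : ℕ) : SimplexCategory := SimplexCategory.mk n

/-- The "initial face" map `s_k : [k] → [n]`, `v ↦ v`. -/
def srcHom (k n : ℕ) (h : k ≤ n) : sobj k ⟶ sobj n :=
  SimplexCategory.mkHom
    ⟨fun v => ⟨v.1, by have := v.isLt; omega⟩, fun a b hab => Fin.mk_le_mk.mpr hab⟩

/-- The "terminal face" map `t_k : [k] → [n]`, `v ↦ v + n - k`. -/
def tgtHom (k n : ℕ) (h : k ≤ n) : sobj k ⟶ sobj n :=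
  SimplexCategory.mkHom
    ⟨fun v => ⟨v.1 + (n - k), by have := v.isLt; omega⟩, fun a b hab => by
      simp only [Fin.le_def] at hab ⊢; omega⟩

/-- A compository: a simplicial set equipped with compositions of `k`-composable
pairs, satisfying the identity axiom, the back-and-forth axiom, and compatibility
with degeneracy and face maps. The dimension `N` of the composite satisfies
`m + n = N + k`. -/
structure Compository where
  X : SSet.{0}
  comp : ∀ {m n k N : ℕ} (hm : k ≤ m) (hn : k ≤ n) (_ : m + n = N + k)
    (A : X.obj (op (sobj m))) (B : X.obj (op (sobj n))),
    X.map (tgtHom k m hm).op A = X.map (srcHom k n hn).op B → X.obj (op (sobj N))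
  /-- Identity axiom: `As_k ∘_k A = A`. -/
  id_left : ∀ {m k : ℕ} (hm : k ≤ m) (A : X.obj (op (sobj m))) h,
    comp (le_refl k) hm (by omega) (X.map (srcHom k m hm).op A) A h = A
  /-- Identity axiom: `A ∘_k At_k = A`. -/
  id_right : ∀ {m k : ℕ} (hm : k ≤ m) (A : X.obj (op (sobj m))) h,
    comp hm (le_refl k) (by omega) A (X.map (tgtHom k m hm).op A) h = A
  /-- Back-and-forth axiom: `(A ∘_k B)s_{m+i} ∘_{k+i} B = A ∘_k B` for `i ≤ n - k`. -/
  back_forth_left : ∀ {m n k N : ℕ} (hm : k ≤ m) (hn : k ≤ n) (hN : m + n = N + k)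
    (i : ℕ) (hi : i ≤ n - k)
    (A : X.obj (op (sobj m))) (B : X.obj (op (sobj n)))
    (hAB : X.map (tgtHom k m hm).op A = X.map (srcHom k n hn).op B)
    (h : X.map (tgtHom (k + i) (m + i) (by omega)).op
      (X.map (srcHom (m + i) N (by omega)).op (comp hm hn hN A B hAB))
      = X.map (srcHom (k + i) n (by omega)).op B),
    comp (show k + i ≤ m + i by omega) (show k + i ≤ n by omega)
      (show (m + i) + n = N + (k + i) by omega)
      (X.map (srcHom (m + i) N (by omega)).op (comp hm hn hN A B hAB)) B h
    = comp hm hn hN A B hAB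
  /-- Back-and-forth axiom: `A ∘_{k+j} (A ∘_k B)t_{n+j} = A ∘_k B` for `j ≤ m - k`. -/
  back_forth_right : ∀ {m n k N : ℕ} (hm : k ≤ m) (hn : k ≤ n) (hN : m + n = N + k)
    (j : ℕ) (hj : j ≤ m - k)
    (A : X.obj (op (sobj m))) (B : X.obj (op (sobj n)))
    (hAB : X.map (tgtHom k m hm).op A = X.map (srcHom k n hn).op B)
    (h : X.map (tgtHom (k + j) m (by omega)).op A
      = X.map (srcHom (k + j) (n + j) (by omega)).op
        (X.map (tgtHom (n + j) N (by omega)).op (comp hm hn hN A B hAB))),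
    comp (show k + j ≤ m by omega) (show k + j ≤ n + j by omega)
      (show m + (n + j) = N + (k + j) by omega)
      A (X.map (tgtHom (n + j) N (by omega)).op (comp hm hn hN A B hAB)) h
    = comp hm hn hN A B hAB
  /-- `(A ∘_k B)η_i = Aη_i ∘_k B` for `i ≤ m - k`. -/
  comp_eta_low : ∀ {m n k N : ℕ} (hm : k ≤ m) (hn : k ≤ n) (hN : m + n = N + k)
    (i : ℕ) (hi : i ≤ m - k)
    (A : X.obj (op (sobj m))) (B : X.obj (op (sobj n)))
    (hAB : X.map (tgtHom k m hm).op A = X.map (srcHom k n hn).op B)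
    (h : X.map (tgtHom k (m + 1) (by omega)).op
      (X.map (SimplexCategory.σ (⟨i, by omega⟩ : Fin (m + 1))).op A)
      = X.map (srcHom k n hn).op B),
    X.map (SimplexCategory.σ (⟨i, by omega⟩ : Fin (N + 1))).op (comp hm hn hN A B hAB)
    = comp (show k ≤ m + 1 by omega) hn (show (m + 1) + n = (N + 1) + k by omega)
        (X.map (SimplexCategory.σ (⟨i, by omega⟩ : Fin (m + 1))).op A) B h
  /-- `(A ∘_k B)η_i = A ∘_k Bη_{i-m+k}` for `i ≥ m`. -/
  comp_eta_high : ∀ {m n k N : ℕ} (hm : k ≤ m) (hn : k ≤ n) (hN : m + n = N + k)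
    (i : ℕ) (hi1 : m ≤ i) (hi2 : i ≤ N)
    (A : X.obj (op (sobj m))) (B : X.obj (op (sobj n)))
    (hAB : X.map (tgtHom k m hm).op A = X.map (srcHom k n hn).op B)
    (h : X.map (tgtHom k m hm).op A
      = X.map (srcHom k (n + 1) (by omega)).op
        (X.map (SimplexCategory.σ (⟨i - m + k, by omega⟩ : Fin (n + 1))).op B)),
    X.map (SimplexCategory.σ (⟨i, by omega⟩ : Fin (N + 1))).op (comp hm hn hN A B hAB)
    = comp hm (show k ≤ n + 1 by omega) (show m + (n + 1) = (N + 1) + k by omega)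
        A (X.map (SimplexCategory.σ (⟨i - m + k, by omega⟩ : Fin (n + 1))).op B) h
  /-- `(A ∘_k B)η_i = Aη_i ∘_{k+1} Bη_{i-m+k}` for `m - k ≤ i ≤ m`. -/
  comp_eta_mid : ∀ {m n k N : ℕ} (hm : k ≤ m) (hn : k ≤ n) (hN : m + n = N + k)
    (i : ℕ) (hi1 : m - k ≤ i) (hi2 : i ≤ m)
    (A : X.obj (op (sobj m))) (B : X.obj (op (sobj n)))
    (hAB : X.map (tgtHom k m hm).op A = X.map (srcHom k n hn).op B)
    (h : X.map (tgtHom (k + 1) (m + 1) (by omega)).op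
      (X.map (SimplexCategory.σ (⟨i, by omega⟩ : Fin (m + 1))).op A)
      = X.map (srcHom (k + 1) (n + 1) (by omega)).op
        (X.map (SimplexCategory.σ (⟨i - m + k, by omega⟩ : Fin (n + 1))).op B)),
    X.map (SimplexCategory.σ (⟨i, by omega⟩ : Fin (N + 1))).op (comp hm hn hN A B hAB)
    = comp (show k + 1 ≤ m + 1 by omega) (show k + 1 ≤ n + 1 by omega)
        (show (m + 1) + (n + 1) = (N + 1) + (k + 1) by omega)
        (X.map (SimplexCategory.σ (⟨i, by omega⟩ : Fin (m + 1))).op A)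
        (X.map (SimplexCategory.σ (⟨i - m + k, by omega⟩ : Fin (n + 1))).op B) h
  /-- `(A ∘_k B)∂_i = A∂_i ∘_k B` for `i < m - k` (here `A` is an `(m+1)`-simplex). -/
  comp_delta_low : ∀ {m n k N : ℕ} (hm : k ≤ m + 1) (hn : k ≤ n)
    (hN : (m + 1) + n = (N + 1) + k)
    (i : ℕ) (hi : i < m + 1 - k)
    (A : X.obj (op (sobj (m + 1)))) (B : X.obj (op (sobj n)))
    (hAB : X.map (tgtHom k (m + 1) hm).op A = X.map (srcHom k n hn).op B)
    (h : X.map (tgtHom k m (by omega)).op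
      (X.map (SimplexCategory.δ (⟨i, by omega⟩ : Fin (m + 2))).op A)
      = X.map (srcHom k n hn).op B),
    X.map (SimplexCategory.δ (⟨i, by omega⟩ : Fin (N + 2))).op (comp hm hn hN A B hAB)
    = comp (show k ≤ m by omega) hn (show m + n = N + k by omega)
        (X.map (SimplexCategory.δ (⟨i, by omega⟩ : Fin (m + 2))).op A) B h
  /-- `(A ∘_k B)∂_i = A ∘_k B∂_{i-m+k}` for `i > m` (here `B` is an `(n+1)`-simplex). -/
  comp_delta_high : ∀ {m n k N : ℕ} (hm : k ≤ m) (hn : k ≤ n + 1)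
    (hN : m + (n + 1) = (N + 1) + k)
    (i : ℕ) (hi1 : m < i) (hi2 : i ≤ N + 1)
    (A : X.obj (op (sobj m))) (B : X.obj (op (sobj (n + 1))))
    (hAB : X.map (tgtHom k m hm).op A = X.map (srcHom k (n + 1) hn).op B)
    (h : X.map (tgtHom k m hm).op A
      = X.map (srcHom k n (by omega)).op
        (X.map (SimplexCategory.δ (⟨i - m + k, by omega⟩ : Fin (n + 2))).op B)),
    X.map (SimplexCategory.δ (⟨i, by omega⟩ : Fin (N + 2))).op (comp hm hn hN A B hAB)
    = comp hm (show k ≤ n by omega) (show m + n = N + k by omega)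
        A (X.map (SimplexCategory.δ (⟨i - m + k, by omega⟩ : Fin (n + 2))).op B) h

end Compo

/-!
By the back-and-forth axiom, `A ∘_i (A ∘_k B)t_{n+i-k} = A ∘_k B`, so the first rule reduces to
`(A ∘_k B)t_{n+i-k} = At_i ∘_k B`. A terminal face is an iterate of the coface `∂_0`, and the
face axiom `(A ∘_k B)∂_0 = A∂_0 ∘_k B` moves the cofaces one at a time past the composite
(downward induction on `i`). The second rule is the mirror image, with initial faces, last
cofaces and `(A ∘_k B)∂_{last} = A ∘_k B∂_{last}`.
-/

namespace Compo

lemma tgtHom_self (n : ℕ) (h : n ≤ n) : tgtHom n n h = 𝟙 _ := by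
  ext v
  simp [tgtHom]

lemma srcHom_self (n : ℕ) (h : n ≤ n) : srcHom n n h = 𝟙 _ := rfl

lemma tgtHom_comp_tgtHom {a b c : ℕ} (hab : a ≤ b) (hbc : b ≤ c) :
    tgtHom a b hab ≫ tgtHom b c hbc = tgtHom a c (hab.trans hbc) := by
  ext v
  change v.1 + (b - a) + (c - b) = v.1 + (c - a)
  omega

lemma srcHom_comp_srcHom {a b c : ℕ} (hab : a ≤ b) (hbc : b ≤ c) :
    srcHom a b hab ≫ srcHom b c hbc = srcHom a c (hab.trans hbc) := rfl

lemma tgtHom_succ (j : ℕ) (h : j ≤ j + 1) :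
    tgtHom j (j + 1) h = SimplexCategory.δ (⟨0, by omega⟩ : Fin (j + 2)) := by
  ext v
  simp [tgtHom, SimplexCategory.δ, Fin.succAbove]

lemma srcHom_succ (j : ℕ) (h : j ≤ j + 1) :
    srcHom j (j + 1) h = SimplexCategory.δ (⟨j + 1, by omega⟩ : Fin (j + 2)) := by
  change _ = SimplexCategory.δ (Fin.last _)
  ext v
  simp [srcHom, SimplexCategory.δ]
  rfl

lemma tgtHom_eq_δ_comp {a b : ℕ} (h : a ≤ b) (h' : a + 1 ≤ b) :
    tgtHom a b h = SimplexCategory.δ (⟨0, by omega⟩ : Fin (a + 2)) ≫ tgtHom (a + 1) b h' := by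
  rw [← tgtHom_succ a (by omega), tgtHom_comp_tgtHom]

lemma srcHom_eq_δ_comp {a b : ℕ} (h : a ≤ b) (h' : a + 1 ≤ b) :
    srcHom a b h = SimplexCategory.δ (⟨a + 1, by omega⟩ : Fin (a + 2)) ≫ srcHom (a + 1) b h' := by
  rw [← srcHom_succ a (by omega), srcHom_comp_srcHom]

namespace Compository

variable (𝒞 : Compository)

lemma comp_congr {m n k N : ℕ} (hm : k ≤ m) (hn : k ≤ n) (hN : m + n = N + k)
    {A A' : 𝒞.X.obj (op (sobj m))} {B B' : 𝒞.X.obj (op (sobj n))}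
    (hA : A = A') (hB : B = B') (h h') :
    𝒞.comp hm hn hN A B h = 𝒞.comp hm hn hN A' B' h' := by
  subst hA hB; rfl

theorem map_tgtHom_comp {m n k N : ℕ} (hm : k ≤ m) (hn : k ≤ n) (hN : m + n = N + k)
    (A : 𝒞.X.obj (op (sobj m))) (B : 𝒞.X.obj (op (sobj n)))
    (hAB : 𝒞.X.map (tgtHom k m hm).op A = 𝒞.X.map (srcHom k n hn).op B)
    {i M : ℕ} (hki : k ≤ i) (him : i ≤ m) (hM : i + n = M + k) (hMN : M ≤ N) (h) :
    𝒞.X.map (tgtHom M N hMN).op (𝒞.comp hm hn hN A B hAB)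
      = 𝒞.comp hki hn hM (𝒞.X.map (tgtHom i m him).op A) B h := by
  induction him using Nat.decreasingInduction generalizing M with
  | self =>
    obtain rfl : M = N := by omega
    simp only [tgtHom_self, op_id, Functor.map_id_apply]
  | of_succ i hi ih =>
    have hM1N : M + 1 ≤ N := by omega
    have hA : 𝒞.X.map (tgtHom k (i + 1) (by omega)).op (𝒞.X.map (tgtHom (i + 1) m hi).op A)
        = 𝒞.X.map (srcHom k n hn).op B := by
      rw [← Functor.map_comp_apply, ← op_comp, tgtHom_comp_tgtHom]; exact hAB
    have hAi : 𝒞.X.map (tgtHom i m hi.le).op A = 𝒞.X.map (SimplexCategory.δ ⟨0, by omega⟩).op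
        (𝒞.X.map (tgtHom (i + 1) m hi).op A) := by
      rw [tgtHom_eq_δ_comp _ hi, op_comp, Functor.map_comp_apply]
    rw [tgtHom_eq_δ_comp _ hM1N, op_comp, Functor.map_comp_apply, ih (by omega) (by omega) hM1N hA,
      𝒞.comp_delta_low (by omega) hn (by omega) 0 (by omega) _ B hA (hAi ▸ h)]
    exact 𝒞.comp_congr _ _ _ hAi.symm rfl _ _

theorem map_srcHom_comp {m n k N : ℕ} (hm : k ≤ m) (hn : k ≤ n) (hN : m + n = N + k)
    (A : 𝒞.X.obj (op (sobj m))) (B : 𝒞.X.obj (op (sobj n)))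
    (hAB : 𝒞.X.map (tgtHom k m hm).op A = 𝒞.X.map (srcHom k n hn).op B)
    {j M : ℕ} (hkj : k ≤ j) (hjn : j ≤ n) (hM : m + j = M + k) (hMN : M ≤ N) (h) :
    𝒞.X.map (srcHom M N hMN).op (𝒞.comp hm hn hN A B hAB)
      = 𝒞.comp hm hkj hM A (𝒞.X.map (srcHom j n hjn).op B) h := by
  induction hjn using Nat.decreasingInduction generalizing M with
  | self =>
    obtain rfl : M = N := by omega
    simp only [srcHom_self, op_id, Functor.map_id_apply]
  | of_succ j hj ih =>
    have hM1N : M + 1 ≤ N := by omega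
    have hB : 𝒞.X.map (tgtHom k m hm).op A
        = 𝒞.X.map (srcHom k (j + 1) (by omega)).op (𝒞.X.map (srcHom (j + 1) n hj).op B) := by
      rw [← Functor.map_comp_apply, ← op_comp, srcHom_comp_srcHom]; exact hAB
    have hBj : 𝒞.X.map (srcHom j n hj.le).op B = 𝒞.X.map (SimplexCategory.δ ⟨j + 1, by omega⟩).op
        (𝒞.X.map (srcHom (j + 1) n hj).op B) := by
      rw [srcHom_eq_δ_comp _ hj, op_comp, Functor.map_comp_apply]
    have hidx : (⟨M + 1 - m + k, by omega⟩ : Fin (j + 2)) = ⟨j + 1, by omega⟩ :=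
      Fin.mk.inj_iff.mpr (by omega)
    rw [srcHom_eq_δ_comp _ hM1N, op_comp, Functor.map_comp_apply, ih (by omega) (by omega) hM1N hB,
      𝒞.comp_delta_high hm (by omega) (by omega) (M + 1) (by omega) le_rfl A _ hB
        (by rw [hidx, ← hBj]; exact h)]
    exact 𝒞.comp_congr _ _ _ rfl (by rw [hidx, hBj]) _ _

theorem comp_comp_map_tgtHom {m n k N : ℕ} (hm : k ≤ m) (hn : k ≤ n) (hN : m + n = N + k)
    (A : 𝒞.X.obj (op (sobj m))) (B : 𝒞.X.obj (op (sobj n)))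
    (hAB : 𝒞.X.map (tgtHom k m hm).op A = 𝒞.X.map (srcHom k n hn).op B)
    {i M : ℕ} (hki : k ≤ i) (him : i ≤ m) (hM : i + n = M + k) (h₁)
    (h₂ : 𝒞.X.map (tgtHom i m him).op A
      = 𝒞.X.map (srcHom i M (by omega)).op
        (𝒞.comp hki hn hM (𝒞.X.map (tgtHom i m him).op A) B h₁)) :
    𝒞.comp him (show i ≤ M by omega) (show m + M = N + i by omega) A
      (𝒞.comp hki hn hM (𝒞.X.map (tgtHom i m him).op A) B h₁) h₂
    = 𝒞.comp hm hn hN A B hAB := by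
  obtain ⟨j, rfl⟩ : ∃ j, i = k + j := ⟨i - k, by omega⟩
  obtain rfl : M = n + j := by omega
  have hC := 𝒞.map_tgtHom_comp hm hn hN A B hAB hki him hM (by omega) h₁
  rw [← 𝒞.back_forth_right hm hn hN j (by omega) A B hAB (by rwa [hC])]
  exact 𝒞.comp_congr _ _ _ rfl hC.symm _ _

theorem comp_map_srcHom_comp {m n k N : ℕ} (hm : k ≤ m) (hn : k ≤ n) (hN : m + n = N + k)
    (A : 𝒞.X.obj (op (sobj m))) (B : 𝒞.X.obj (op (sobj n)))
    (hAB : 𝒞.X.map (tgtHom k m hm).op A = 𝒞.X.map (srcHom k n hn).op B)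
    {j M : ℕ} (hkj : k ≤ j) (hjn : j ≤ n) (hM : m + j = M + k) (h₁)
    (h₂ : 𝒞.X.map (tgtHom j M (by omega)).op
      (𝒞.comp hm hkj hM A (𝒞.X.map (srcHom j n hjn).op B) h₁)
      = 𝒞.X.map (srcHom j n hjn).op B) :
    𝒞.comp (show j ≤ M by omega) hjn (show M + n = N + j by omega)
      (𝒞.comp hm hkj hM A (𝒞.X.map (srcHom j n hjn).op B) h₁) B h₂
    = 𝒞.comp hm hn hN A B hAB := by
  obtain ⟨i, rfl⟩ : ∃ i, j = k + i := ⟨j - k, by omega⟩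
  obtain rfl : M = m + i := by omega
  have hC := 𝒞.map_srcHom_comp hm hn hN A B hAB hkj hjn hM (by omega) h₁
  rw [← 𝒞.back_forth_left hm hn hN i (by omega) A B hAB (by rwa [hC])]
  exact 𝒞.comp_congr _ _ _ hC.symm rfl _ _

end Compository

end Compo

open Compo in
/-- the 2-step rule in a compository: for `k ≤ i ≤ m` and `k ≤ j ≤ n`,
`A ∘_k B = A ∘_i (At_i ∘_k B) = (A ∘_k Bs_j) ∘_j B`. -/
theorem compository_two_step (𝒞 : Compository) {m n k N : ℕ}
    (hm : k ≤ m) (hn : k ≤ n) (hN : m + n = N + k)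
    (A : 𝒞.X.obj (op (sobj m))) (B : 𝒞.X.obj (op (sobj n)))
    (hAB : 𝒞.X.map (tgtHom k m hm).op A = 𝒞.X.map (srcHom k n hn).op B)
    (i j : ℕ) (hki : k ≤ i) (him : i ≤ m) (hkj : k ≤ j) (hjn : j ≤ n) :
    (∀ (M : ℕ) (hM : i + n = M + k) h₁
      (h₂ : 𝒞.X.map (tgtHom i m him).op A
        = 𝒞.X.map (srcHom i M (by omega)).op
          (𝒞.comp hki hn hM (𝒞.X.map (tgtHom i m him).op A) B h₁)),
      𝒞.comp him (show i ≤ M by omega) (show m + M = N + i by omega) A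
        (𝒞.comp hki hn hM (𝒞.X.map (tgtHom i m him).op A) B h₁) h₂
      = 𝒞.comp hm hn hN A B hAB) ∧
    (∀ (M : ℕ) (hM : m + j = M + k) h₁
      (h₂ : 𝒞.X.map (tgtHom j M (by omega)).op
        (𝒞.comp hm hkj hM A (𝒞.X.map (srcHom j n hjn).op B) h₁)
        = 𝒞.X.map (srcHom j n hjn).op B),
      𝒞.comp (show j ≤ M by omega) hjn (show M + n = N + j by omega)
        (𝒞.comp hm hkj hM A (𝒞.X.map (srcHom j n hjn).op B) h₁) B h₂
      = 𝒞.comp hm hn hN A B hAB) :=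
  ⟨fun _ hM h₁ h₂ => 𝒞.comp_comp_map_tgtHom hm hn hN A B hAB hki him hM h₁ h₂,
    fun _ hM h₁ h₂ => 𝒞.comp_map_srcHom_comp hm hn hN A B hAB hkj hjn hM h₁ h₂⟩
end
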